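/- arXiv:2511.22392 — 12 statements merged into one kernel-verified Lean document; each statement's English description precedes it below -/
import Mathlib

section
/- Let G be a finite set and C a set, let S ⊆ (G → C) be colour-permutation-invariant, and let δ ∈ S and g ∈ G be such that g wears a unique colour in δ (δ h ≠ δ g for all h ≠ g) and some colour of C is worn by no agent in δ (the range of δ is not all of C). Then g never knows its colour at δ: g ∉ K_n(δ) for every n ∈ ℕ. -/
/-- Worlds `δ, δ'` are `g`-similar: they agree on all agents other than `g`. -/
def gSim {G C : Type*} (g : G) (δ δ' : G → C) : Prop := ∀ h, h ≠ g → δ h = δ' h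

/-- The iterated bell dynamics: `bellSim S n g δ δ'` is the stage-`n` indistinguishability
relation `δ ~_g^n δ'` on `S`. At stage `n+1` the relation is refined by the exact set of
knowers (the fine bell dynamics). -/
def bellSim {G C : Type*} (S : Set (G → C)) : ℕ → G → (G → C) → (G → C) → Prop
  | 0 => fun g δ δ' => δ ∈ S ∧ δ' ∈ S ∧ gSim g δ δ'
  | n + 1 => fun g δ δ' => bellSim S n g δ δ' ∧
      {x | ∀ ε, bellSim S n x δ ε → ε x = δ x} =
        {x | ∀ ε, bellSim S n x δ' ε → ε x = δ' x}

/-- The knower set `K_n(δ)`: agents who know their own colour at `δ` at stage `n`. -/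
def knows {G C : Type*} (S : Set (G → C)) (n : ℕ) (δ : G → C) : Set G :=
  {g | ∀ δ', bellSim S n g δ δ' → δ' g = δ g}

/-- `S` is invariant under permutations of the colours. -/
def permInv {G C : Type*} (S : Set (G → C)) : Prop :=
  ∀ ι : C ≃ C, ∀ δ ∈ S, (⇑ι ∘ δ) ∈ S

/-- `S` is solvable: every agent eventually knows its colour at every world of `S`. -/
def solvable {G C : Type*} (S : Set (G → C)) : Prop :=
  ∀ δ ∈ S, ∀ g : G, ∃ n : ℕ, g ∈ knows S n δ

/-- `S*`: the worlds without unique colours (every worn colour is worn at least twice). -/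
def Sstar (G C : Type*) : Set (G → C) := {δ | ∀ g, ∃ h, h ≠ g ∧ δ h = δ g}

/-- If `S` is colour-permutation-invariant, `δ ∈ S`, gnome `g` wears a unique colour in `δ`,
and some colour of `C` is worn by no agent in `δ`, then `g` never knows its colour at `δ`. -/
theorem stmt_1 {G C : Type*} [Fintype G] (S : Set (G → C)) (hS : permInv S)
    (δ : G → C) (hδ : δ ∈ S) (g : G)
    (hunique : ∀ h, h ≠ g → δ h ≠ δ g)
    (homit : ¬ Function.Surjective δ) :
    ∀ n : ℕ, g ∉ knows S n δ := by
  classical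
  have perm_bell : ∀ n : ℕ, ∀ (ι : C ≃ C) (x : G) (α β : G → C),
      bellSim S n x α β → bellSim S n x (⇑ι ∘ α) (⇑ι ∘ β) := by
    intro n
    induction n with
    | zero =>
      rintro ι x α β ⟨ha, hb, hsim⟩
      exact ⟨hS ι α ha, hS ι β hb, fun h hh => by simp [Function.comp, hsim h hh]⟩
    | succ n ih =>
      have keq : ∀ (ι : C ≃ C) (α : G → C),
          {x | ∀ ε, bellSim S n x (⇑ι ∘ α) ε → ε x = (⇑ι ∘ α) x} =
          {x | ∀ ε, bellSim S n x α ε → ε x = α x} := by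
        intro ι α
        ext x
        simp only [Set.mem_setOf_eq]
        constructor
        · intro hx ε hε
          have := hx (⇑ι ∘ ε) (ih ι x α ε hε)
          exact ι.injective this
        · intro hx ε hε
          have h2 : bellSim S n x α (⇑ι.symm ∘ ε) := by
            have h3 := ih ι.symm x (⇑ι ∘ α) ε hε
            have h4 : ⇑ι.symm ∘ ⇑ι ∘ α = α := by ext y; simp
            rwa [h4] at h3
          have h5 := hx _ h2
          simp only [Function.comp_apply] at h5 ⊢
          exact (Equiv.symm_apply_eq ι).mp h5
      rintro ι x α β ⟨h1, h2⟩
      exact ⟨ih ι x α β h1, by rw [keq ι α, keq ι β, h2]⟩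
  have perm_knows : ∀ (n : ℕ) (ι : C ≃ C) (α : G → C),
      {x | ∀ ε, bellSim S n x (⇑ι ∘ α) ε → ε x = (⇑ι ∘ α) x} =
      {x | ∀ ε, bellSim S n x α ε → ε x = α x} := by
    intro n ι α
    ext x
    simp only [Set.mem_setOf_eq]
    constructor
    · intro hx ε hε
      exact ι.injective (hx (⇑ι ∘ ε) (perm_bell n ι x α ε hε))
    · intro hx ε hε
      have h2 : bellSim S n x α (⇑ι.symm ∘ ε) := by
        have h3 := perm_bell n ι.symm x (⇑ι ∘ α) ε hε
        have h4 : ⇑ι.symm ∘ ⇑ι ∘ α = α := by ext y; simp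
        rwa [h4] at h3
      have h5 := hx _ h2
      simp only [Function.comp_apply] at h5 ⊢
      exact (Equiv.symm_apply_eq ι).mp h5
  rw [Function.Surjective] at homit
  push_neg at homit
  obtain ⟨c, hc⟩ := homit
  set σ : C ≃ C := Equiv.swap (δ g) c with hσ
  set δ' : G → C := ⇑σ ∘ δ with hδ'def
  have hδ' : δ' ∈ S := hS σ δ hδ
  have hδ'g : δ' g = c := by simp [hδ'def, hσ]
  have hδ'h : ∀ h, h ≠ g → δ' h = δ h := fun h hh => by
    simp only [hδ'def, Function.comp_apply, hσ]
    exact Equiv.swap_apply_of_ne_of_ne (hunique h hh) (hc h)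
  have hbell : ∀ n, bellSim S n g δ δ' := by
    intro n
    induction n with
    | zero => exact ⟨hδ, hδ', fun h hh => (hδ'h h hh).symm⟩
    | succ n ih =>
      refine ⟨ih, ?_⟩
      rw [show δ' = ⇑σ ∘ δ from rfl, perm_knows n σ δ]
  intro n hk
  have := hk δ' (hbell n)
  rw [hδ'g] at this
  exact hc g this.symm
end

section
/- Let G be a finite nonempty set and C a set with more elements than G (so every world omits at least one colour). If S ⊆ (G → C) is colour-permutation-invariant and solvable, then no world of S contains a unique colour: for every δ ∈ S and every g ∈ G there is h ≠ g with δ h = δ g. ("Santa's announcement solvable is at least as informative as solvable′.") -/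
lemma bellSim_map {G C : Type*} {S : Set (G → C)} (hS : permInv S) :
    ∀ (n : ℕ) (ι : C ≃ C) (g : G) (δ ε : G → C), bellSim S n g δ ε →
      bellSim S n g (⇑ι ∘ δ) (⇑ι ∘ ε) := by
  intro n
  induction n with
  | zero =>
    rintro ι g δ ε ⟨h1, h2, h3⟩
    exact ⟨hS ι δ h1, hS ι ε h2, fun h hh => congrArg ι (h3 h hh)⟩
  | succ n ih =>
    rintro ι g δ ε ⟨h1, h2⟩
    refine ⟨ih ι g δ ε h1, ?_⟩
    have key : ∀ μ : G → C, {x | ∀ ε', bellSim S n x (⇑ι ∘ μ) ε' → ε' x = (⇑ι ∘ μ) x} =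
        {x | ∀ ε', bellSim S n x μ ε' → ε' x = μ x} := by
      intro μ
      ext x
      simp only [Set.mem_setOf_eq]
      constructor
      · intro hx ε' hε'
        have h := hx (⇑ι ∘ ε') (ih ι x μ ε' hε')
        exact ι.injective h
      · intro hx ε' hε'
        have h' : bellSim S n x μ (⇑ι.symm ∘ ε') := by
          have h := ih ι.symm x (⇑ι ∘ μ) ε' hε'
          have he : ⇑ι.symm ∘ (⇑ι ∘ μ) = μ := by
            funext y; simp
          rwa [he] at h
        have h := hx _ h'
        have h2 := congrArg ι h
        simpa using h2
    rw [key δ, key ε]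
    exact h2

lemma knowsSet_perm {G C : Type*} {S : Set (G → C)} (hS : permInv S)
    (n : ℕ) (ι : C ≃ C) (μ : G → C) :
    {x | ∀ ε', bellSim S n x (⇑ι ∘ μ) ε' → ε' x = (⇑ι ∘ μ) x} =
      {x | ∀ ε', bellSim S n x μ ε' → ε' x = μ x} := by
  ext x
  simp only [Set.mem_setOf_eq]
  constructor
  · intro hx ε' hε'
    exact ι.injective (hx (⇑ι ∘ ε') (bellSim_map hS n ι x μ ε' hε'))
  · intro hx ε' hε'
    have h' : bellSim S n x μ (⇑ι.symm ∘ ε') := by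
      have h := bellSim_map hS n ι.symm x (⇑ι ∘ μ) ε' hε'
      have he : ⇑ι.symm ∘ (⇑ι ∘ μ) = μ := by funext y; simp
      rwa [he] at h
    have h := congrArg ι (hx _ h')
    simpa using h

/-- If `G` is finite and nonempty, `C` has more elements than `G`, and `S` is
colour-permutation-invariant and solvable, then no world of `S` contains a unique colour. -/
theorem stmt_2 {G C : Type*} [Fintype G] [Nonempty G]
    (hcard : (Fintype.card G : Cardinal) < Cardinal.mk C)
    (S : Set (G → C)) (hS : permInv S) (hsolv : solvable S) :
    ∀ δ ∈ S, ∀ g : G, ∃ h, h ≠ g ∧ δ h = δ g := by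
  classical
  by_contra hcon
  push_neg at hcon
  obtain ⟨δ, hδ, g, hg⟩ := hcon
  -- find a fresh colour
  have hnsurj : ¬ Function.Surjective δ := by
    intro hsurj
    haveI : Fintype C := Fintype.ofSurjective δ hsurj
    have h1 : Fintype.card C ≤ Fintype.card G := Fintype.card_le_of_surjective δ hsurj
    rw [Cardinal.mk_fintype C] at hcard
    exact absurd (Nat.cast_le.mpr h1) (not_le_of_gt hcard)
  obtain ⟨c, hc⟩ : ∃ c, ∀ h : G, δ h ≠ c := by
    by_contra h
    push_neg at h
    exact hnsurj fun c => h c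
  set ι : C ≃ C := Equiv.swap (δ g) c with hι
  have hsim : ∀ n, bellSim S n g δ (⇑ι ∘ δ) := by
    intro n
    induction n with
    | zero =>
      refine ⟨hδ, hS ι δ hδ, fun h hh => ?_⟩
      have : ι (δ h) = δ h := Equiv.swap_apply_of_ne_of_ne (hg h hh) (hc h)
      exact this.symm
    | succ n ihn =>
      exact ⟨ihn, (knowsSet_perm hS n ι δ).symm⟩
  obtain ⟨n, hn⟩ := hsolv δ hδ g
  have h := hn (⇑ι ∘ δ) (hsim n)
  have : ι (δ g) = c := Equiv.swap_apply_left _ _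
  rw [show (⇑ι ∘ δ) g = ι (δ g) from rfl, this] at h
  exact hc g h.symm
end

section
/- Let G be a finite set and C a set, and take S = S* = {δ : G → C | for every g ∈ G there is h ≠ g with δ h = δ g}. For every δ ∈ S* and g ∈ G: g knows its colour at stage 0 (g ∈ K_0(δ)) if and only if either exactly two agents wear the colour δ g in δ (|{h ∈ G | δ h = δ g}| = 2) or δ is constant (all agents wear the same colour). -/
lemma pair_prop {G C : Type*} (δ : G → C) (g : G)
    (h2 : {h : G | δ h = δ g}.ncard = 2) :
    ∃ h0, h0 ≠ g ∧ δ h0 = δ g ∧ ∀ k, δ k = δ g → k = g ∨ k = h0 := by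
  obtain ⟨a, b, hab, hAeq⟩ := Set.ncard_eq_two.mp h2
  have key : ∀ k, δ k = δ g ↔ (k = a ∨ k = b) := by
    intro k
    constructor
    · intro hk
      have : k ∈ ({a, b} : Set G) := hAeq ▸ hk
      simpa using this
    · intro hk
      have : k ∈ ({a, b} : Set G) := by simpa using hk
      rw [← hAeq] at this; exact this
  have hg : g = a ∨ g = b := (key g).mp rfl
  rcases hg with rfl | rfl
  · exact ⟨b, fun h => hab h.symm, (key b).mpr (Or.inr rfl),
      fun k hk => (key k).mp hk⟩
  · refine ⟨a, hab.symm ∘ Eq.symm ∘ id, (key a).mpr (Or.inl rfl),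
      fun k hk => ((key k).mp hk).symm⟩

/-- On `S* = Sstar G C`, agent `g` knows its colour at stage 0 at `δ` iff either exactly two
agents wear the colour `δ g` in `δ`, or `δ` is constant (all agents wear the same colour). -/
theorem stmt_3 {G C : Type*} [Fintype G] :
    ∀ δ ∈ Sstar G C, ∀ g : G,
      (g ∈ knows (Sstar G C) 0 δ ↔
        ({h : G | δ h = δ g}.ncard = 2 ∨ ∀ h : G, δ h = δ g)) := by
  classical
  intro δ hδ g
  constructor
  · intro hk
    by_contra hcon
    push_neg at hcon
    obtain ⟨hA2, h1, hh1⟩ := hcon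
    set A : Set G := {h : G | δ h = δ g} with hAdef
    have hAfin : A.Finite := Set.toFinite A
    obtain ⟨h0, hh0ne, hh0⟩ := hδ g
    have hgA : g ∈ A := rfl
    have hh0A : h0 ∈ A := hh0
    have h2le : 2 ≤ A.ncard := by
      have hsub : ({g, h0} : Set G) ⊆ A := by
        intro x hx
        rcases hx with rfl | hx
        · exact hgA
        · simp only [Set.mem_singleton_iff] at hx; subst hx; exact hh0A
      calc 2 = ({g, h0} : Set G).ncard := (Set.ncard_pair (Ne.symm hh0ne)).symm
        _ ≤ A.ncard := Set.ncard_le_ncard hsub hAfin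
    have h3le : 3 ≤ A.ncard := by omega
    have hthird : ∀ k : G, ∃ m ∈ A, m ≠ g ∧ m ≠ k := by
      intro k
      have hle : A.ncard ≤ (A \ {g, k}).ncard + ({g, k} : Set G).ncard :=
        Set.ncard_le_ncard_diff_add_ncard A _ (Set.toFinite _)
      have hpair : ({g, k} : Set G).ncard ≤ 2 := by
        calc ({g, k} : Set G).ncard ≤ ({k} : Set G).ncard + 1 :=
              Set.ncard_insert_le _ _
          _ ≤ 2 := by rw [Set.ncard_singleton]
      have hne : (A \ {g, k}).Nonempty :=
        Set.nonempty_of_ncard_ne_zero (by omega)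
      obtain ⟨m, hmA, hm⟩ := hne
      simp only [Set.mem_insert_iff, Set.mem_singleton_iff, not_or] at hm
      exact ⟨m, hmA, hm.1, hm.2⟩
    have hh1g : h1 ≠ g := fun h => hh1 (by rw [h])
    set δ' := Function.update δ g (δ h1) with hδ'def
    have hsim : gSim g δ δ' := by
      intro h hne
      simp [hδ'def, Function.update_of_ne hne]
    have hmem : δ' ∈ Sstar G C := by
      intro k
      by_cases hkg : k = g
      · subst hkg
        exact ⟨h1, hh1g, by
          simp [hδ'def, Function.update_of_ne hh1g, Function.update_self]⟩
      · obtain ⟨j, hjk, hj⟩ := hδ k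
        by_cases hjg : j = g
        · rw [hjg] at hj
          have hkA : k ∈ A := by
            show δ k = δ g
            exact hj.symm
          obtain ⟨m, hmA, hmg, hmk⟩ := hthird k
          refine ⟨m, hmk, ?_⟩
          have : δ m = δ k := by
            have h1 : δ m = δ g := hmA
            have h2 : δ k = δ g := hkA
            rw [h1, h2]
          simp [hδ'def, Function.update_of_ne hmg, Function.update_of_ne hkg, this]
        · exact ⟨j, hjk, by
            simp [hδ'def, Function.update_of_ne hjg, Function.update_of_ne hkg, hj]⟩
    have hfin := hk δ' ⟨hδ, hmem, hsim⟩
    simp only [hδ'def, Function.update_self] at hfin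
    exact hh1 hfin
  · rintro hcase δ' ⟨_, hδ'S, hsim⟩
    rcases hcase with h2 | hconst
    · obtain ⟨h0, hh0g, hh0, huniq⟩ := pair_prop δ g h2
      have hδ'h0 : δ' h0 = δ g := by rw [← hsim h0 hh0g]; exact hh0
      obtain ⟨k, hkh0, hkc⟩ := hδ'S h0
      by_cases hkg : k = g
      · subst hkg; rw [hkc, hδ'h0]
      · have hkδ : δ k = δ g := by
          rw [hsim k hkg, hkc, hδ'h0]
        rcases huniq k hkδ with rfl | rfl
        · exact absurd rfl hkg
        · exact absurd rfl hkh0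
    · obtain ⟨k, hkg, hkc⟩ := hδ'S g
      rw [hkc.symm, ← hsim k hkg, hconst k]
end

section
/- Let G be a finite set and C a set, and take S = S* = {δ : G → C | for every g ∈ G there is h ≠ g with δ h = δ g}. Then S* is solvable: for every δ ∈ S* and every g ∈ G there exists n ∈ ℕ with g ∈ K_n(δ); that is, under iterated ringing of the bell within the restriction to worlds without unique colours, every gnome eventually knows the colour of its own hat. -/
/-!
Permutations of the agents preserve `S*`, and knowledge is equivariant under them, so two
agents wearing the same colour learn it at the same stage. Induct on the number of wearers of
`g`'s colour at `δ`. If `g` never learns its colour, some world `δ'` differing from `δ` only at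
`g` has the same knower sets as `δ` at every stage: there are only finitely many such worlds
(each gives `g` the colour of another agent), so if each were told apart from `δ` at some
stage, all would be by a common stage, at which `g` knows. In `δ'` a former classmate `h` of
`g` has one classmate fewer, so by induction `h` knows its colour at `δ'`, hence at `δ`, at
some stage, and then so does `g`.
-/

section

variable {G C : Type*}

theorem gSim_comp_perm_iff (σ : Equiv.Perm G) (g : G) (δ δ' : G → C) :
    gSim g (δ ∘ σ) (δ' ∘ σ) ↔ gSim (σ g) δ δ' := by
  refine ⟨fun hs k hk => ?_, fun hs k hk => hs (σ k) (σ.injective.ne hk)⟩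
  simpa using hs (σ.symm k) (by rwa [ne_eq, Equiv.symm_apply_eq])

theorem gSim.update_eq [DecidableEq G] {g : G} {δ δ' : G → C} (hsim : gSim g δ δ') :
    Function.update δ g (δ' g) = δ' :=
  Function.update_eq_iff.2 ⟨rfl, hsim⟩

theorem gSim.preimage_ssubset {g : G} {δ δ' : G → C} (hsim : gSim g δ δ')
    (hne : δ' g ≠ δ g) : δ' ⁻¹' {δ g} ⊂ δ ⁻¹' {δ g} := by
  have hsub : δ' ⁻¹' {δ g} ⊆ δ ⁻¹' {δ g} := fun x hx => by
    have hxg : x ≠ g := by rintro rfl; exact hne hx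
    exact (hsim x hxg).trans hx
  exact (Set.ssubset_iff_of_subset hsub).2 ⟨g, rfl, hne⟩

theorem bellSim_iff_bellSim_zero (S : Set (G → C)) (n : ℕ) (g : G) (δ δ' : G → C) :
    bellSim S n g δ δ' ↔ bellSim S 0 g δ δ' ∧ ∀ m < n, knows S m δ = knows S m δ' := by
  induction n with
  | zero => simp
  | succ n ih =>
    change bellSim S n g δ δ' ∧ knows S n δ = knows S n δ' ↔ _
    rw [ih, Nat.forall_lt_succ_right, and_assoc]

def IsAgentPermInvariant (S : Set (G → C)) : Prop :=
  ∀ σ : Equiv.Perm G, ∀ δ ∈ S, δ ∘ σ ∈ S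

section IsAgentPermInvariant

variable {S : Set (G → C)}

theorem IsAgentPermInvariant.comp_mem_iff (hS : IsAgentPermInvariant S)
    (σ : Equiv.Perm G) (δ : G → C) : δ ∘ σ ∈ S ↔ δ ∈ S :=
  ⟨fun h => by simpa [Function.comp_assoc] using hS σ.symm _ h, hS σ δ⟩

theorem mem_knows_comp_perm_iff_of_bellSim {n : ℕ} {σ : Equiv.Perm G}
    (hσ : ∀ g δ δ', bellSim S n g (δ ∘ σ) (δ' ∘ σ) ↔ bellSim S n (σ g) δ δ')
    (δ : G → C) (g : G) : g ∈ knows S n (δ ∘ σ) ↔ σ g ∈ knows S n δ := by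
  refine ⟨fun hg ε hε => ?_, fun hg ε hε => ?_⟩
  · simpa using hg (ε ∘ σ) ((hσ g δ ε).2 hε)
  · have hε' : ε = (ε ∘ σ.symm) ∘ σ := by ext; simp
    rw [hε'] at hε ⊢
    exact hg _ ((hσ g δ _).1 hε)

theorem IsAgentPermInvariant.bellSim_comp_iff (hS : IsAgentPermInvariant S)
    (n : ℕ) (σ : Equiv.Perm G) (g : G) (δ δ' : G → C) :
    bellSim S n g (δ ∘ σ) (δ' ∘ σ) ↔ bellSim S n (σ g) δ δ' := by
  induction n generalizing g δ δ' with
  | zero => simp only [bellSim, hS.comp_mem_iff, gSim_comp_perm_iff]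
  | succ n ih =>
    have hknows (δ : G → C) : knows S n (δ ∘ σ) = σ ⁻¹' knows S n δ :=
      Set.ext (mem_knows_comp_perm_iff_of_bellSim ih δ)
    change bellSim S n g (δ ∘ σ) (δ' ∘ σ) ∧ knows S n (δ ∘ σ) = knows S n (δ' ∘ σ) ↔
      bellSim S n (σ g) δ δ' ∧ knows S n δ = knows S n δ'
    rw [ih, hknows, hknows, Set.preimage_eq_preimage σ.surjective]

theorem IsAgentPermInvariant.mem_knows_of_apply_eq (hS : IsAgentPermInvariant S)
    {n : ℕ} {δ : G → C} {g h : G} (hgh : δ g = δ h) (hh : h ∈ knows S n δ) :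
    g ∈ knows S n δ := by
  classical
  have hswap : δ ∘ Equiv.swap g h = δ := by
    ext x
    rcases eq_or_ne x g with rfl | hxg
    · simp [hgh]
    rcases eq_or_ne x h with rfl | hxh
    · simp [hgh]
    · simp [Equiv.swap_apply_of_ne_of_ne hxg hxh]
  have := mem_knows_comp_perm_iff_of_bellSim (hS.bellSim_comp_iff n (Equiv.swap g h)) δ g
  rw [hswap, Equiv.swap_apply_left] at this
  exact this.2 hh

end IsAgentPermInvariant

theorem exists_mem_knows_of_distinguished {S : Set (G → C)} {δ : G → C} {g : G}
    (hfin : {δ' | bellSim S 0 g δ δ'}.Finite)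
    (hdist : ∀ δ', bellSim S 0 g δ δ' → δ' g ≠ δ g → ∃ m, knows S m δ ≠ knows S m δ') :
    ∃ n, g ∈ knows S n δ := by
  have hev : ∀ᶠ n in Filter.atTop, ∀ δ' ∈ {δ' | bellSim S 0 g δ δ'},
      δ' g ≠ δ g → ∃ m < n, knows S m δ ≠ knows S m δ' := by
    refine (hfin.eventually_all).2 fun δ' hδ' => ?_
    by_cases hne : δ' g = δ g
    · exact Filter.Eventually.of_forall fun _ h => absurd hne h
    obtain ⟨m, hm⟩ := hdist δ' hδ' hne
    filter_upwards [Filter.eventually_gt_atTop m] with n hn using fun _ => ⟨m, hn, hm⟩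
  obtain ⟨n, hn⟩ := hev.exists
  refine ⟨n, fun δ' hδ' => ?_⟩
  obtain ⟨hδ'₀, hsame⟩ := (bellSim_iff_bellSim_zero S n g δ δ').1 hδ'
  by_contra hne
  obtain ⟨m, hm, hdiff⟩ := hn δ' hδ'₀ hne
  exact hdiff (hsame m hm)

theorem isAgentPermInvariant_Sstar : IsAgentPermInvariant (Sstar G C) := fun σ δ hδ g => by
  obtain ⟨h, hne, hh⟩ := hδ (σ g)
  exact ⟨σ.symm h, by rwa [ne_eq, Equiv.symm_apply_eq], by simpa using hh⟩

theorem finite_setOf_bellSim_zero_Sstar [Finite G] (g : G) (δ : G → C) :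
    {δ' | bellSim (Sstar G C) 0 g δ δ'}.Finite := by
  classical
  refine ((Set.finite_range δ).image (Function.update δ g)).subset ?_
  rintro δ' ⟨-, hδ', hsim⟩
  obtain ⟨h, hhg, hh⟩ := hδ' g
  exact ⟨δ h, ⟨h, rfl⟩, by rw [hsim h hhg, hh, hsim.update_eq]⟩

theorem exists_mem_knows_Sstar_of_forall_ncard_lt [Finite G] {δ : G → C} (hδ : δ ∈ Sstar G C)
    (g : G) (hsmaller : ∀ δ' ∈ Sstar G C, ∀ h, (δ' ⁻¹' {δ' h}).ncard < (δ ⁻¹' {δ g}).ncard →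
      ∃ n, h ∈ knows (Sstar G C) n δ') :
    ∃ n, g ∈ knows (Sstar G C) n δ := by
  by_contra hnever
  refine hnever (exists_mem_knows_of_distinguished (finite_setOf_bellSim_zero_Sstar g δ) ?_)
  rintro δ' ⟨-, hδ', hsim⟩ hne
  by_contra! hsame
  obtain ⟨h, hhg, hh⟩ := hδ g
  have hδ'h : δ' h = δ g := (hsim h hhg).symm.trans hh
  obtain ⟨m, hm⟩ := hsmaller δ' hδ' h <| by
    rw [hδ'h]
    exact Set.ncard_lt_ncard (hsim.preimage_ssubset hne)
  rw [← hsame m] at hm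
  exact hnever ⟨m, isAgentPermInvariant_Sstar.mem_knows_of_apply_eq hh.symm hm⟩

end

/-- `S*` is solvable: under iterated ringing of the bell within the restriction to worlds
without unique colours, every gnome eventually knows the colour of its own hat. -/
theorem stmt_4 {G C : Type*} [Fintype G] : solvable (Sstar G C) := by
  intro δ hδ g
  induction hk : (δ ⁻¹' {δ g}).ncard using Nat.strong_induction_on generalizing δ g with
  | _ k ih =>
    exact exists_mem_knows_Sstar_of_forall_ncard_lt hδ g
      fun δ' hδ' h hlt => ih _ (hk ▸ hlt) δ' hδ' h rfl
end

section
/- Let G be a finite set and C a set with at least two elements, and take S = G → C to be the set of all worlds (no initial announcement is made). Then no agent ever knows its colour: for every δ : G → C, every g ∈ G and every n ∈ ℕ, g ∉ K_n(δ); in particular K_n(δ) = ∅ for all n and δ, so the bell never refines the relations. -/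
lemma not_knows_zero {G C : Type*} [Nontrivial C] (δ : G → C) (g : G) :
    g ∉ knows (Set.univ : Set (G → C)) 0 δ := by
  classical
  intro h
  obtain ⟨c, hc⟩ := exists_ne (δ g)
  have := h (Function.update δ g c)
    ⟨trivial, trivial, fun x hx => (Function.update_of_ne hx c δ).symm⟩
  simp at this
  exact hc this

lemma aux {G C : Type*} [Nontrivial C] (n : ℕ) :
    (∀ (g : G) (δ δ' : G → C),
      bellSim (Set.univ : Set (G → C)) n g δ δ' ↔
        bellSim (Set.univ : Set (G → C)) 0 g δ δ') ∧
    (∀ δ : G → C, knows (Set.univ : Set (G → C)) n δ = ∅) := by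
  induction n with
  | zero =>
    refine ⟨fun g δ δ' => Iff.rfl, fun δ => ?_⟩
    ext g
    simp [not_knows_zero δ g]
  | succ n ih =>
    have hiff : ∀ (g : G) (δ δ' : G → C),
        bellSim (Set.univ : Set (G → C)) (n+1) g δ δ' ↔
          bellSim (Set.univ : Set (G → C)) 0 g δ δ' := by
      intro g δ δ'
      constructor
      · intro h; exact (ih.1 g δ δ').mp h.1
      · intro h
        refine ⟨(ih.1 g δ δ').mpr h, ?_⟩
        have h1 := ih.2 δ
        have h2 := ih.2 δ'
        simp only [knows] at h1 h2
        rw [h1, h2]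
    refine ⟨hiff, fun δ => ?_⟩
    ext g
    simp only [Set.mem_empty_iff_false, iff_false]
    intro hg
    exact not_knows_zero δ g (fun δ' h => hg δ' ((hiff g δ δ').mpr h))

/-- With no initial announcement (`S` is the set of all worlds) and at least two colours,
no agent ever knows its colour; in particular the knower sets are empty and the bell never
refines the relations. -/
theorem stmt_6 {G C : Type*} [Fintype G] [Nontrivial C] :
    (∀ (δ : G → C) (g : G) (n : ℕ), g ∉ knows (Set.univ : Set (G → C)) n δ) ∧
    (∀ (n : ℕ) (δ : G → C), knows (Set.univ : Set (G → C)) n δ = ∅) ∧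
    (∀ (n : ℕ) (g : G) (δ δ' : G → C),
      bellSim (Set.univ : Set (G → C)) n g δ δ' ↔
        bellSim (Set.univ : Set (G → C)) 0 g δ δ') := by
  refine ⟨fun δ g n h => ?_, fun n δ => (aux n).2 δ, fun n => (aux n).1⟩
  have := (aux n).2 δ
  rw [this] at h
  exact h
end

section
/- Let G be a set of 12 agents and C a set of colours containing three distinct colours white, black, rose, and let δ : G → C assign white to exactly 2 agents, black to exactly 2 agents, and rose to the remaining 8 agents. Take S = S* = {δ' : G → C | for every g there is h ≠ g with δ' h = δ' g}. Then K_0(δ) is exactly the set of the four white- and black-hatted agents, and K_1(δ) = G: the white and black gnomes leave at the first ring of the bell and the rose gnomes at the second. -/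
/-!
A gnome whose colour class has exactly two members knows its colour at once: it sees exactly one
hat of that colour, and in `S*` that hat needs a partner, which can only be its own. A gnome whose
class has at least three members can switch to any colour worn by someone else without leaving
`S*`, so it does not know. Hence `K_0(δ)` consists of the white and black gnomes. At the next
stage a rose gnome `g` compares `δ` with the world `δ'` in which it wears, say, white: there the
class of white has three members, so the white gnomes of `δ` no longer know (they could as well
wear black), i.e. `K_0(δ) ≠ K_0(δ')`, and `g` rules `δ'` out.
-/

section Knowledge

variable {G C : Type*}

theorem gSim.eq_update [DecidableEq G] {g : G} {δ δ' : G → C} (h : gSim g δ δ') :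
    δ' = Function.update δ g (δ' g) := by
  funext x
  by_cases hx : x = g
  · subst hx
    rw [Function.update_self]
  · rw [Function.update_of_ne hx, h x hx]

theorem knows_subset_knows_succ (S : Set (G → C)) (n : ℕ) (δ : G → C) :
    knows S n δ ⊆ knows S (n + 1) δ :=
  fun _ hg δ' hδ' => hg δ' hδ'.1

theorem notMem_knows_zero_of_update_mem [DecidableEq G] {S : Set (G → C)} {δ : G → C} {g : G}
    {c : C} (hδ : δ ∈ S) (hupd : Function.update δ g c ∈ S) (hc : c ≠ δ g) :
    g ∉ knows S 0 δ := fun hg =>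
  hc (by simpa using hg _ ⟨hδ, hupd, fun x hx => (Function.update_of_ne hx c δ).symm⟩)

end Knowledge

section Sstar

variable {G C : Type*} {δ : G → C}

theorem mem_Sstar_of_one_lt_ncard (h : ∀ g, 1 < {x | δ x = δ g}.ncard) : δ ∈ Sstar G C := by
  intro g
  obtain ⟨x, hx, hxg⟩ := Set.exists_ne_of_one_lt_ncard (h g) g
  exact ⟨x, hxg, hx⟩

theorem update_mem_Sstar [DecidableEq G] (hδ : δ ∈ Sstar G C) {g h : G} (hhg : h ≠ g)
    (hclass : 2 < {x | δ x = δ g}.ncard) : Function.update δ g (δ h) ∈ Sstar G C := by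
  intro x
  by_cases hxg : x = g
  · subst hxg
    exact ⟨h, hhg, by rw [Function.update_self, Function.update_of_ne hhg]⟩
  rw [Function.update_of_ne hxg]
  by_cases hcol : δ x = δ g
  · have hrest : 1 < ({y | δ y = δ g} \ {g}).ncard := by
      have := Set.pred_ncard_le_ncard_sdiff_singleton {y | δ y = δ g} g
      omega
    obtain ⟨y, ⟨hy, hyg⟩, hyx⟩ := Set.exists_ne_of_one_lt_ncard hrest x
    exact ⟨y, hyx, by rw [Function.update_of_ne hyg, hy, hcol]⟩
  · obtain ⟨y, hyx, hy⟩ := hδ x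
    have hyg : y ≠ g := by
      rintro rfl
      exact hcol hy.symm
    exact ⟨y, hyx, by rw [Function.update_of_ne hyg, hy]⟩

theorem mem_knows_zero_Sstar_of_ncard_eq_two {g : G} (hclass : {x | δ x = δ g}.ncard = 2) :
    g ∈ knows (Sstar G C) 0 δ := by
  rintro δ' ⟨-, hδ', hsim⟩
  obtain ⟨w, hw, hwg⟩ := Set.exists_ne_of_one_lt_ncard (hclass ▸ one_lt_two) g
  have hsub : ({g, w} : Set G) ⊆ {x | δ x = δ g} := Set.pair_subset rfl hw
  have hpair : {x | δ x = δ g} = {g, w} :=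
    (Set.eq_of_subset_of_ncard_le hsub (by rw [hclass, Set.ncard_pair hwg.symm])
      (Set.finite_of_ncard_pos (by rw [hclass]; norm_num))).symm
  obtain ⟨h, hhw, hh⟩ := hδ' w
  rw [← hsim w hwg, hw] at hh
  by_contra hne
  have hhg : h ≠ g := by
    rintro rfl
    exact hne hh
  have hh_mem : h ∈ ({g, w} : Set G) := hpair ▸ (hsim h hhg).trans hh
  rcases hh_mem with rfl | rfl <;> contradiction

theorem knows_zero_Sstar_ne_update [Finite G] [DecidableEq G] (hδ : δ ∈ Sstar G C) {g w v : G}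
    (hw : {x | δ x = δ w}.ncard = 2) (hvw : δ v ≠ δ w) (hgw : δ g ≠ δ w) (hgv : δ g ≠ δ v)
    (hg : 2 < {x | δ x = δ g}.ncard) :
    knows (Sstar G C) 0 δ ≠ knows (Sstar G C) 0 (Function.update δ g (δ w)) := by
  set δ' := Function.update δ g (δ w)
  have hwg : w ≠ g := by
    rintro rfl
    exact hgw rfl
  have hvg : v ≠ g := by
    rintro rfl
    exact hgv rfl
  have hδ' : δ' ∈ Sstar G C := update_mem_Sstar hδ hwg hg
  have hδ'w : δ' w = δ w := Function.update_of_ne hwg _ _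
  have hδ'v : δ' v = δ v := Function.update_of_ne hvg _ _
  have hclass' : 2 < {x | δ' x = δ' w}.ncard := by
    obtain ⟨w', hw', hw'w⟩ := Set.exists_ne_of_one_lt_ncard (hw ▸ one_lt_two) w
    have hw'g : w' ≠ g := by
      rintro rfl
      exact hgw hw'
    rw [Set.two_lt_ncard_iff]
    have hg' : δ' g = δ' w := (Function.update_self g (δ w) δ).trans hδ'w.symm
    have hw'' : δ' w' = δ' w := ((Function.update_of_ne hw'g _ _).trans hw').trans hδ'w.symm
    exact ⟨g, w, w', hg', rfl, hw'', hwg.symm, hw'g.symm, hw'w.symm⟩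
  have hupd : Function.update δ' w (δ' v) ∈ Sstar G C :=
    update_mem_Sstar hδ' (fun h => hvw (h ▸ rfl)) hclass'
  intro hK
  exact notMem_knows_zero_of_update_mem hδ' hupd (by rwa [hδ'v, hδ'w])
    (hK ▸ mem_knows_zero_Sstar_of_ncard_eq_two hw)

theorem notMem_knows_zero_Sstar [DecidableEq G] (hδ : δ ∈ Sstar G C) {g h : G}
    (hg : 2 < {x | δ x = δ g}.ncard) (hh : δ h ≠ δ g) : g ∉ knows (Sstar G C) 0 δ := by
  have hhg : h ≠ g := by
    rintro rfl
    exact hh rfl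
  exact notMem_knows_zero_of_update_mem hδ (update_mem_Sstar hδ hhg hg) hh

theorem mem_knows_one_Sstar [Finite G] [DecidableEq G] (hδ : δ ∈ Sstar G C) {g u v : G}
    (hg : 2 < {x | δ x = δ g}.ncard) (hpair : ∀ h, δ h ≠ δ g → {x | δ x = δ h}.ncard = 2)
    (hu : δ u ≠ δ g) (hv : δ v ≠ δ g) (huv : δ u ≠ δ v) : g ∈ knows (Sstar G C) 1 δ := by
  rintro δ' ⟨⟨-, hδ', hsim⟩, hK⟩
  by_contra hne
  obtain ⟨w, hwg, hw⟩ := hδ' g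
  rw [← hsim w hwg] at hw
  have hK' : knows (Sstar G C) 0 δ = knows (Sstar G C) 0 δ' := hK
  rw [hsim.eq_update, ← hw] at hK'
  have hgw : δ g ≠ δ w := fun e => hne (hw ▸ e.symm)
  obtain ⟨x, hxg, hxw⟩ : ∃ x, δ x ≠ δ g ∧ δ x ≠ δ w := by
    by_cases huw : δ u = δ w
    · exact ⟨v, hv, huw ▸ huv.symm⟩
    · exact ⟨u, hu, huw⟩
  exact knows_zero_Sstar_ne_update hδ (hpair w hgw.symm) hxw hgw hxg.symm hg hK'

end Sstar

theorem card_le_ncard_add_ncard_add_ncard {G C : Type*} [Finite G] {δ : G → C} {a b c : C}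
    (h : ∀ g, δ g ≠ a → δ g ≠ b → δ g = c) :
    Nat.card G ≤ {g | δ g = a}.ncard + {g | δ g = b}.ncard + {g | δ g = c}.ncard := by
  have hcover : (Set.univ : Set G) ⊆ {g | δ g = a} ∪ {g | δ g = b} ∪ {g | δ g = c} :=
    fun g _ => by
      by_cases ha : δ g = a
      · exact Or.inl (Or.inl ha)
      by_cases hb : δ g = b
      · exact Or.inl (Or.inr hb)
      exact Or.inr (h g ha hb)
  rw [← Set.ncard_univ]
  exact (Set.ncard_le_ncard hcover).trans ((Set.ncard_union_le _ _).trans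
    (Nat.add_le_add_right (Set.ncard_union_le _ _) _))

theorem stmt_7_general {G C : Type*} [Fintype G] (hG : Fintype.card G = 12)
    (white black rose : C) (hwb : white ≠ black)
    (δ : G → C)
    (hwhite : {g : G | δ g = white}.ncard = 2)
    (hblack : {g : G | δ g = black}.ncard = 2)
    (hrose : ∀ g : G, δ g ≠ white → δ g ≠ black → δ g = rose) :
    knows (Sstar G C) 0 δ = {g : G | δ g = white ∨ δ g = black} ∧
      knows (Sstar G C) 1 δ = Set.univ := by
  classical
  have hrose_card : 2 < {g | δ g = rose}.ncard := by
    have := card_le_ncard_add_ncard_add_ncard hrose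
    rw [Nat.card_eq_fintype_card, hG, hwhite, hblack] at this
    omega
  have hpair (g : G) (h : δ g = white ∨ δ g = black) : {x | δ x = δ g}.ncard = 2 := by
    rcases h with h | h <;> rwa [h]
  have hlarge (g : G) (h : ¬(δ g = white ∨ δ g = black)) : 2 < {x | δ x = δ g}.ncard := by
    rwa [hrose g (h ∘ Or.inl) (h ∘ Or.inr)]
  have hδ : δ ∈ Sstar G C := mem_Sstar_of_one_lt_ncard fun g => by
    by_cases h : δ g = white ∨ δ g = black
    · exact (hpair g h).symm ▸ one_lt_two
    · exact (hlarge g h).trans' one_lt_two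
  obtain ⟨w, hw⟩ := Set.nonempty_of_ncard_ne_zero (hwhite ▸ two_ne_zero)
  obtain ⟨b, hb⟩ := Set.nonempty_of_ncard_ne_zero (hblack ▸ two_ne_zero)
  have hK0 : knows (Sstar G C) 0 δ = {g | δ g = white ∨ δ g = black} := by
    ext g
    by_cases h : δ g = white ∨ δ g = black
    · simpa [h] using mem_knows_zero_Sstar_of_ncard_eq_two (hpair g h)
    · simpa [h] using notMem_knows_zero_Sstar hδ (hlarge g h) fun e => h (Or.inl (e ▸ hw))
  refine ⟨hK0, Set.eq_univ_of_forall fun g => ?_⟩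
  by_cases h : δ g = white ∨ δ g = black
  · exact knows_subset_knows_succ _ _ _ (hK0 ▸ h)
  have hcol (x : G) (hx : δ x ≠ δ g) : δ x = white ∨ δ x = black := by
    by_contra hx'
    exact hx ((hrose x (hx' ∘ Or.inl) (hx' ∘ Or.inr)).trans
      (hrose g (h ∘ Or.inl) (h ∘ Or.inr)).symm)
  exact mem_knows_one_Sstar hδ (hlarge g h) (fun x hx => hpair x (hcol x hx))
    (fun e => h (Or.inl (e ▸ hw))) (fun e => h (Or.inr (e ▸ hb))) (by rw [hw, hb]; exact hwb)

/-- Twelve gnomes, 2 white, 2 black and 8 rose hats, in the restriction `S*`: `K_0(δ)` is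
exactly the set of the four white- and black-hatted gnomes (they leave at the first ring)
and `K_1(δ) = G` (the rose gnomes leave at the second ring). -/
theorem stmt_7 {G C : Type*} [Fintype G] (hG : Fintype.card G = 12)
    (white black rose : C) (hwb : white ≠ black) (hwr : white ≠ rose) (hbr : black ≠ rose)
    (δ : G → C)
    (hwhite : {g : G | δ g = white}.ncard = 2)
    (hblack : {g : G | δ g = black}.ncard = 2)
    (hrose : ∀ g : G, δ g ≠ white → δ g ≠ black → δ g = rose) :
    knows (Sstar G C) 0 δ = {g : G | δ g = white ∨ δ g = black} ∧
      knows (Sstar G C) 1 δ = Set.univ :=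
  stmt_7_general hG white black rose hwb δ hwhite hblack hrose
end

section
/- Take G = {a, b, c} (three muddy children) and C = {0, 1}. For every subset S of the 8 worlds G → C with exactly 7 elements, S is solvable: every child eventually knows its own value at every world of S. -/
/- ### Auxiliary machinery: decidability of `bellSim`/`knows` over the 8 worlds -/

local notation "W" => (Fin 3 → Fin 2)

/-- The list of all 8 worlds. -/
def wlist : List W := [![0,0,0], ![0,0,1], ![0,1,0], ![0,1,1],
  ![1,0,0], ![1,0,1], ![1,1,0], ![1,1,1]]

lemma mem_wlist (w : W) : w ∈ wlist := by
  have h : w = ![w 0, w 1, w 2] := by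
    funext i; fin_cases i <;> rfl
  rw [h]
  have h2 : ∀ x : Fin 2, x = 0 ∨ x = 1 := by decide
  rcases h2 (w 0) with h0 | h0 <;> rcases h2 (w 1) with h1 | h1 <;>
    rcases h2 (w 2) with hc | hc <;> rw [h0, h1, hc] <;> simp [wlist]

lemma forall_world (P : W → Prop) : (∀ w, P w) ↔ (∀ w ∈ wlist, P w) :=
  ⟨fun h w _ => h w, fun h w => h w (mem_wlist w)⟩

instance instDecGSim (g : Fin 3) (δ δ' : W) : Decidable (gSim g δ δ') :=
  inferInstanceAs (Decidable (∀ h, h ≠ g → δ h = δ' h))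

/-- `bellSim` is decidable (quantifiers over worlds are run through `wlist`). -/
def bellSimDec (S : Set W) [DecidablePred (· ∈ S)] :
    ∀ n g δ δ', Decidable (bellSim S n g δ δ')
  | 0, g, δ, δ' => inferInstanceAs (Decidable (δ ∈ S ∧ δ' ∈ S ∧ gSim g δ δ'))
  | n+1, g, δ, δ' =>
    letI : ∀ g δ δ', Decidable (bellSim S n g δ δ') := bellSimDec S n
    decidable_of_iff (bellSim S n g δ δ' ∧
      ∀ x : Fin 3, ((∀ ε ∈ wlist, bellSim S n x δ ε → ε x = δ x) ↔
        (∀ ε ∈ wlist, bellSim S n x δ' ε → ε x = δ' x)))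
      (by rw [bellSim]; simp only [Set.ext_iff, Set.mem_setOf_eq, ← forall_world])

attribute [instance] bellSimDec

instance instDecKnows (S : Set W) [DecidablePred (· ∈ S)] (n : ℕ) (δ : W) (g : Fin 3) :
    Decidable (g ∈ knows S n δ) :=
  decidable_of_iff (∀ δ' ∈ wlist, bellSim S n g δ δ' → δ' g = δ g)
    (by rw [← forall_world]; exact Iff.rfl)

instance instDecCompl (δ₀ x : W) : Decidable (x ∈ ({δ₀}ᶜ : Set W)) :=
  inferInstanceAs (Decidable ¬(x = δ₀))

set_option maxRecDepth 1000000 in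
/-- The finite computation: in the complement of a single missing world,
every agent knows its colour at every world by stage 2. -/
lemma key_seven : ∀ δ₀ ∈ wlist, ∀ δ ∈ wlist, δ ∈ ({δ₀}ᶜ : Set W) → ∀ g,
    g ∈ knows ({δ₀}ᶜ : Set W) 2 δ := by decide

/-- Three muddy children: every 7-element subset of the 8 worlds is solvable. -/
theorem stmt_8 :
    ∀ S : Set (Fin 3 → Fin 2), S.ncard = 7 → solvable S := by
  intro S hS
  have hc : Sᶜ.ncard = 1 := by
    have h := Set.ncard_add_ncard_compl S
    rw [hS] at h
    have h8 : Nat.card (Fin 3 → Fin 2) = 8 := by simp [Nat.card_eq_fintype_card]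
    omega
  obtain ⟨δ₀, h0⟩ := Set.ncard_eq_one.mp hc
  have hSeq : S = ({δ₀}ᶜ : Set (Fin 3 → Fin 2)) := by
    rw [← compl_compl S, h0]
  subst hSeq
  intro δ hδ g
  exact ⟨2, key_seven δ₀ (mem_wlist δ₀) δ (mem_wlist δ) hδ g⟩
end

section
/- Take G = {a, b, c} and C = {0, 1}, and let S = {000, 100} (the a-edge of the cube). Then child a never learns whether it is muddy: for both worlds δ ∈ S and every n ∈ ℕ, a ∉ K_n(δ). -/
namespace Stmt9Aux

def Sedge : Set (Fin 3 → Fin 2) := {![0,0,0], ![1,0,0]}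

def fl : Fin 2 → Fin 2 := ![1,0]

def fmap (δ : Fin 3 → Fin 2) : Fin 3 → Fin 2 := fun i => if i = 0 then fl (δ 0) else δ i

lemma fl_inj : Function.Injective fl := by decide

lemma fmap_invol (δ : Fin 3 → Fin 2) : fmap (fmap δ) = δ := by
  funext i
  by_cases h : i = 0 <;> simp [fmap, h]
  · have : ∀ x, fl (fl x) = x := by decide
    exact this _

lemma fmap_000 : fmap ![0,0,0] = ![1,0,0] := by
  funext i; fin_cases i <;> rfl

lemma fmap_100 : fmap ![1,0,0] = ![0,0,0] := by
  funext i; fin_cases i <;> rfl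

lemma fmap_mem {δ : Fin 3 → Fin 2} (h : δ ∈ Sedge) : fmap δ ∈ Sedge := by
  rcases h with h | h <;> subst h
  · rw [fmap_000]; right; rfl
  · rw [fmap_100]; left; rfl

lemma gSim_fmap (g : Fin 3) (δ δ' : Fin 3 → Fin 2) :
    gSim g (fmap δ) (fmap δ') ↔ gSim g δ δ' := by
  constructor <;> intro H h hg
  · have := H h hg
    by_cases h0 : h = 0
    · subst h0; simpa [fmap] using fl_inj (by simpa [fmap] using this)
    · simpa [fmap, h0] using this
  · by_cases h0 : h = 0
    · subst h0; simp [fmap, H 0 hg]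
    · simpa [fmap, h0] using H h hg

lemma main : ∀ n, ∀ g δ δ',
    bellSim Sedge n g δ δ' ↔ bellSim Sedge n g (fmap δ) (fmap δ') := by
  intro n
  induction n with
  | zero =>
    intro g δ δ'
    constructor
    · rintro ⟨h1, h2, h3⟩
      exact ⟨fmap_mem h1, fmap_mem h2, (gSim_fmap g δ δ').2 h3⟩
    · rintro ⟨h1, h2, h3⟩
      refine ⟨?_, ?_, (gSim_fmap g δ δ').1 h3⟩
      · simpa [fmap_invol] using fmap_mem h1
      · simpa [fmap_invol] using fmap_mem h2
  | succ n ih =>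
    have fval : ∀ (ε δ : Fin 3 → Fin 2) (x : Fin 3), ε x = δ x ↔ fmap ε x = fmap δ x := by
      intro ε δ x
      by_cases h0 : x = 0
      · subst h0; simp [fmap]; exact ⟨fun h => by rw [h], fun h => fl_inj h⟩
      · simp [fmap, h0]
    have K : ∀ δ, {x | ∀ ε, bellSim Sedge n x (fmap δ) ε → ε x = fmap δ x} =
        {x | ∀ ε, bellSim Sedge n x δ ε → ε x = δ x} := by
      intro δ
      ext x
      simp only [Set.mem_setOf_eq]
      constructor
      · intro H ε hε
        have := H (fmap ε) ((ih x δ ε).1 hε)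
        exact (fval ε δ x).2 this
      · intro H ε hε
        have h2 : bellSim Sedge n x δ (fmap ε) := by
          have := (ih x (fmap δ) ε).1 hε
          rwa [fmap_invol] at this
        have := H (fmap ε) h2
        have := (fval (fmap ε) δ x).1 this
        rwa [fmap_invol] at this
    intro g δ δ'
    show (bellSim Sedge n g δ δ' ∧ _) ↔ (bellSim Sedge n g (fmap δ) (fmap δ') ∧ _)
    rw [K δ, K δ', ih g δ δ']

lemma sim_all : ∀ n, bellSim Sedge n 0 ![0,0,0] ![1,0,0] := by
  intro n
  induction n with
  | zero =>
    refine ⟨Or.inl rfl, Or.inr rfl, ?_⟩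
    intro h hg
    fin_cases h
    · exact absurd rfl hg
    · rfl
    · rfl
  | succ n ih =>
    refine ⟨ih, ?_⟩
    have K : ∀ δ, {x | ∀ ε, bellSim Sedge n x (fmap δ) ε → ε x = fmap δ x} =
        {x | ∀ ε, bellSim Sedge n x δ ε → ε x = δ x} := by
      intro δ
      ext x
      simp only [Set.mem_setOf_eq]
      have fval : ∀ (ε δ : Fin 3 → Fin 2) (x : Fin 3), ε x = δ x ↔ fmap ε x = fmap δ x := by
        intro ε δ x
        by_cases h0 : x = 0
        · subst h0; simp [fmap]; exact ⟨fun h => by rw [h], fun h => fl_inj h⟩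
        · simp [fmap, h0]
      constructor
      · intro H ε hε
        have := H (fmap ε) ((main n x δ ε).1 hε)
        exact (fval ε δ x).2 this
      · intro H ε hε
        have h2 : bellSim Sedge n x δ (fmap ε) := by
          have := (main n x (fmap δ) ε).1 hε
          rwa [fmap_invol] at this
        have := H (fmap ε) h2
        have := (fval (fmap ε) δ x).1 this
        rwa [fmap_invol] at this
    have := K ![0,0,0]
    rw [fmap_000] at this
    exact this.symm

lemma sim_rev : ∀ n, bellSim Sedge n 0 ![1,0,0] ![0,0,0] := by
  intro n
  have := (main n 0 ![1,0,0] ![0,0,0]).2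
  rw [fmap_100, fmap_000] at this
  exact this (sim_all n)

end Stmt9Aux

/-- On the a-edge `S = {000, 100}` of the cube, child `a` never learns whether it is muddy. -/
theorem stmt_9 :
    ∀ δ ∈ ({![0,0,0], ![1,0,0]} : Set (Fin 3 → Fin 2)),
      ∀ n : ℕ, (0 : Fin 3) ∉ knows ({![0,0,0], ![1,0,0]} : Set (Fin 3 → Fin 2)) n δ := by
  intro δ hδ n hk
  rcases hδ with h | h <;> subst h
  · have := hk ![1,0,0] (Stmt9Aux.sim_all n)
    exact absurd this (by decide)
  · have := hk ![0,0,0] (Stmt9Aux.sim_rev n)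
    exact absurd this (by decide)
end

section
/- Take G = {a, b, c} and C = {0, 1}, and let S = {010, 110, 001, 101, 011, 111} (the complement of the a-edge {000, 100}). Then child a never learns whether it is muddy: for every world δ ∈ S and every n ∈ ℕ, a ∉ K_n(δ). -/
def Flip (δ : Fin 3 → Fin 2) : Fin 3 → Fin 2 := Function.update δ 0 (δ 0 + 1)

lemma Flip_apply_zero (δ : Fin 3 → Fin 2) : Flip δ 0 = δ 0 + 1 := by
  simp [Flip]

lemma Flip_apply_ne (δ : Fin 3 → Fin 2) {h : Fin 3} (hh : h ≠ 0) : Flip δ h = δ h := by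
  simp [Flip, Function.update_of_ne hh]

lemma Flip_Flip (δ : Fin 3 → Fin 2) : Flip (Flip δ) = δ := by
  funext h
  by_cases hh : h = 0
  · subst hh; rw [Flip_apply_zero, Flip_apply_zero]
    exact (by decide : ∀ a : Fin 2, a + 1 + 1 = a) _
  · rw [Flip_apply_ne _ hh, Flip_apply_ne _ hh]

abbrev S6 : Set (Fin 3 → Fin 2) :=
  {![0,1,0], ![1,1,0], ![0,0,1], ![1,0,1], ![0,1,1], ![1,1,1]}

lemma Flip_mem {δ : Fin 3 → Fin 2} (h : δ ∈ S6) : Flip δ ∈ S6 := by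
  simp only [S6, Set.mem_insert_iff, Set.mem_singleton_iff] at h ⊢
  rcases h with h|h|h|h|h|h <;> subst h
  · right; left; decide
  · left; decide
  · right; right; right; left; decide
  · right; right; left; decide
  · right; right; right; right; right; decide
  · right; right; right; right; left; decide

lemma fin2_add_iff : ∀ a b : Fin 2, a = b + 1 ↔ a + 1 = b := by decide

lemma gSim_flip (g : Fin 3) (δ ε : Fin 3 → Fin 2) :
    gSim g (Flip δ) (Flip ε) ↔ gSim g δ ε := by
  constructor <;> intro H h hg
  · by_cases h0 : h = 0
    · subst h0
      have := H 0 hg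
      rw [Flip_apply_zero, Flip_apply_zero] at this
      exact add_right_cancel this
    · have := H h hg
      rwa [Flip_apply_ne _ h0, Flip_apply_ne _ h0] at this
  · by_cases h0 : h = 0
    · subst h0
      rw [Flip_apply_zero, Flip_apply_zero, H 0 hg]
    · rw [Flip_apply_ne _ h0, Flip_apply_ne _ h0]; exact H h hg

lemma bellSim_flip (n : ℕ) (g : Fin 3) (δ ε : Fin 3 → Fin 2) :
    bellSim S6 n g (Flip δ) (Flip ε) ↔ bellSim S6 n g δ ε := by
  induction n generalizing g δ ε with
  | zero =>
    simp only [bellSim, gSim_flip]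
    constructor
    · rintro ⟨h1, h2, h3⟩
      refine ⟨?_, ?_, h3⟩
      · have := Flip_mem h1; rwa [Flip_Flip] at this
      · have := Flip_mem h2; rwa [Flip_Flip] at this
    · rintro ⟨h1, h2, h3⟩
      exact ⟨Flip_mem h1, Flip_mem h2, h3⟩
  | succ n ih =>
    simp only [bellSim]
    have key : ∀ ρ : Fin 3 → Fin 2,
        {x | ∀ ε', bellSim S6 n x (Flip ρ) ε' → ε' x = Flip ρ x} =
        {x | ∀ ε', bellSim S6 n x ρ ε' → ε' x = ρ x} := by
      intro ρ
      ext x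
      simp only [Set.mem_setOf_eq]
      constructor
      · intro H ε' hb
        have := H (Flip ε') ((ih x ρ ε').mpr hb)
        by_cases hx : x = 0
        · subst hx
          rw [Flip_apply_zero, Flip_apply_zero] at this
          exact add_right_cancel this
        · rwa [Flip_apply_ne _ hx, Flip_apply_ne _ hx] at this
      · intro H ε' hb
        have hb' : bellSim S6 n x ρ (Flip ε') := by
          have := (ih x ρ (Flip ε')).mp ?_
          · exact this
          · rwa [Flip_Flip]
        have := H (Flip ε') hb'
        by_cases hx : x = 0
        · subst hx
          rw [Flip_apply_zero] at this ⊢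
          exact (fin2_add_iff _ _).mpr this
        · rw [Flip_apply_ne _ hx] at this ⊢; exact this
    constructor
    · rintro ⟨h1, h2⟩
      refine ⟨(ih g δ ε).mp h1, ?_⟩
      rw [key δ, key ε] at h2; exact h2
    · rintro ⟨h1, h2⟩
      exact ⟨(ih g δ ε).mpr h1, by rw [key δ, key ε]; exact h2⟩

lemma bellSim_self_flip {δ : Fin 3 → Fin 2} (hδ : δ ∈ S6) (n : ℕ) :
    bellSim S6 n 0 δ (Flip δ) := by
  induction n with
  | zero =>
    refine ⟨hδ, Flip_mem hδ, fun h hh => (Flip_apply_ne δ hh).symm⟩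
  | succ n ih =>
    refine ⟨ih, ?_⟩
    ext x
    simp only [Set.mem_setOf_eq]
    constructor
    · intro H ε' hb
      have hb' : bellSim S6 n x δ (Flip ε') := by
        have := (bellSim_flip n x δ (Flip ε')).mp ?_
        · exact this
        · rwa [Flip_Flip]
      have := H (Flip ε') hb'
      by_cases hx : x = 0
      · subst hx
        rw [Flip_apply_zero] at this ⊢
        exact (fin2_add_iff _ _).mpr this
      · rw [Flip_apply_ne _ hx] at this ⊢; exact this
    · intro H ε' hb
      have := H (Flip ε') ((bellSim_flip n x δ ε').mpr hb)
      by_cases hx : x = 0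
      · subst hx
        rw [Flip_apply_zero, Flip_apply_zero] at this
        exact add_right_cancel this
      · rwa [Flip_apply_ne _ hx, Flip_apply_ne _ hx] at this

/-- On the six-world complement `S = {010, 110, 001, 101, 011, 111}` of the a-edge,
child `a` never learns whether it is muddy. -/
theorem stmt_10 :
    ∀ δ ∈ ({![0,1,0], ![1,1,0], ![0,0,1], ![1,0,1], ![0,1,1], ![1,1,1]} :
        Set (Fin 3 → Fin 2)),
      ∀ n : ℕ, (0 : Fin 3) ∉
        knows ({![0,1,0], ![1,1,0], ![0,0,1], ![1,0,1], ![0,1,1], ![1,1,1]} :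
          Set (Fin 3 → Fin 2)) n δ := by
  intro δ hδ n ha
  have hb := bellSim_self_flip hδ n
  have := ha (Flip δ) hb
  rw [Flip_apply_zero] at this
  exact (by decide : ∀ a : Fin 2, a + 1 ≠ a) (δ 0) this
end

section
/- Take G = {a, b, c} and C = {0, 1}, and let S = {000, 100, 110}. Under the coarse bell_∅ dynamics (refinement only by whether the set of knowers is empty), the relations are never refined: K'_0 is nonempty at every world of S, ~'^n_g = ~'^0_g for all n and g, and consequently child a never knows its value at 000 or 100 and child b never knows its value at 100 or 110, at any stage n. Hence the fine and coarse dynamics genuinely differ on S: under the fine dynamics all children eventually know, under the coarse dynamics they do not. -/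
/-- The coarse (`bell_∅`) dynamics: at stage `n+1` the relation is refined only by whether
the knower set is empty. -/
def bellSimC {G C : Type*} (S : Set (G → C)) : ℕ → G → (G → C) → (G → C) → Prop
  | 0 => fun g δ δ' => δ ∈ S ∧ δ' ∈ S ∧ gSim g δ δ'
  | n + 1 => fun g δ δ' => bellSimC S n g δ δ' ∧
      ({x | ∀ ε, bellSimC S n x δ ε → ε x = δ x} = (∅ : Set G) ↔
        {x | ∀ ε, bellSimC S n x δ' ε → ε x = δ' x} = (∅ : Set G))

/-- The knower set `K'_n(δ)` of the coarse dynamics. -/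
def knowsC {G C : Type*} (S : Set (G → C)) (n : ℕ) (δ : G → C) : Set G :=
  {g | ∀ δ', bellSimC S n g δ δ' → δ' g = δ g}

instance {G C : Type*} [DecidableEq G] [DecidableEq C] [Fintype G] (g : G) (δ δ' : G → C) :
    Decidable (gSim g δ δ') := by unfold gSim; infer_instance

namespace S12
abbrev wA : Fin 3 → Fin 2 := ![0,0,0]
abbrev wB : Fin 3 → Fin 2 := ![1,0,0]
abbrev wC : Fin 3 → Fin 2 := ![1,1,0]
abbrev S : Set (Fin 3 → Fin 2) := {wA, wB, wC}

lemma mem_S {δ} (h : δ ∈ S) : δ = wA ∨ δ = wB ∨ δ = wC := h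

lemma hA : wA ∈ S := Or.inl rfl
lemma hB : wB ∈ S := Or.inr (Or.inl rfl)
lemma hC : wC ∈ S := Or.inr (Or.inr rfl)

lemma simC0 {g δ δ'} (h : bellSimC S 0 g δ δ') : δ ∈ S ∧ δ' ∈ S ∧ gSim g δ δ' := h

-- knowsC 0 memberships
lemma kC0A : (1 : Fin 3) ∈ knowsC S 0 wA := by
  intro δ' h
  obtain ⟨-, hδ', hs⟩ := simC0 h
  rcases mem_S hδ' with rfl | rfl | rfl <;> revert hs <;> decide

lemma kC0B : (2 : Fin 3) ∈ knowsC S 0 wB := by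
  intro δ' h
  obtain ⟨-, hδ', hs⟩ := simC0 h
  rcases mem_S hδ' with rfl | rfl | rfl <;> revert hs <;> decide

lemma kC0C : (2 : Fin 3) ∈ knowsC S 0 wC := by
  intro δ' h
  obtain ⟨-, hδ', hs⟩ := simC0 h
  rcases mem_S hδ' with rfl | rfl | rfl <;> revert hs <;> decide

lemma kC0_ne {δ} (h : δ ∈ S) : knowsC S 0 δ ≠ ∅ := by
  rcases mem_S h with rfl | rfl | rfl
  · exact fun he => absurd (he ▸ kC0A) (Set.notMem_empty _)
  · exact fun he => absurd (he ▸ kC0B) (Set.notMem_empty _)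
  · exact fun he => absurd (he ▸ kC0C) (Set.notMem_empty _)

lemma simC_base : ∀ n {g δ δ'}, bellSimC S n g δ δ' → bellSimC S 0 g δ δ'
  | 0, _, _, _, h => h
  | n + 1, _, _, _, h => simC_base n h.1

lemma simC_eq : ∀ (n : ℕ) (g : Fin 3) (δ δ' : Fin 3 → Fin 2),
    bellSimC S n g δ δ' ↔ bellSimC S 0 g δ δ' := by
  intro n
  induction n with
  | zero => exact fun _ _ _ => Iff.rfl
  | succ n ih =>
    intro g δ δ'
    constructor
    · exact fun h => (ih g δ δ').mp h.1
    · intro h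
      obtain ⟨hδ, hδ', -⟩ := simC0 h
      have key : ∀ ε ∈ S, {x | ∀ ρ, bellSimC S n x ε ρ → ρ x = ε x} ≠ (∅ : Set (Fin 3)) := by
        intro ε hε
        have : {x | ∀ ρ, bellSimC S n x ε ρ → ρ x = ε x} = knowsC S 0 ε := by
          ext x
          constructor
          · exact fun hx ρ hρ => hx ρ ((ih x ε ρ).mpr hρ)
          · exact fun hx ρ hρ => hx ρ ((ih x ε ρ).mp hρ)
        rw [this]; exact kC0_ne hε
      exact ⟨(ih g δ δ').mpr h, by simp [key δ hδ, key δ' hδ']⟩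

lemma knowsC_eq (n : ℕ) (δ : Fin 3 → Fin 2) : knowsC S n δ = knowsC S 0 δ := by
  ext g
  exact ⟨fun h δ' hh => h δ' ((simC_eq n g δ δ').mpr hh),
         fun h δ' hh => h δ' ((simC_eq n g δ δ').mp hh)⟩

-- coarse non-knowledge at stage 0
lemma nkA : (0 : Fin 3) ∉ knowsC S 0 wA := fun h => by
  have := h wB ⟨hA, hB, by decide⟩; revert this; decide
lemma nkB0 : (0 : Fin 3) ∉ knowsC S 0 wB := fun h => by
  have := h wA ⟨hB, hA, by decide⟩; revert this; decide
lemma nkB1 : (1 : Fin 3) ∉ knowsC S 0 wB := fun h => by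
  have := h wC ⟨hB, hC, by decide⟩; revert this; decide
lemma nkC1 : (1 : Fin 3) ∉ knowsC S 0 wC := fun h => by
  have := h wB ⟨hC, hB, by decide⟩; revert this; decide

-- fine dynamics
lemma sim0 {g δ δ'} (h : bellSim S 0 g δ δ') : δ ∈ S ∧ δ' ∈ S ∧ gSim g δ δ' := h

lemma k0A1 : (1 : Fin 3) ∈ knows S 0 wA := by
  intro δ' h
  obtain ⟨-, hδ', hs⟩ := sim0 h
  rcases mem_S hδ' with rfl | rfl | rfl <;> revert hs <;> decide
lemma k0C0 : (0 : Fin 3) ∈ knows S 0 wC := by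
  intro δ' h
  obtain ⟨-, hδ', hs⟩ := sim0 h
  rcases mem_S hδ' with rfl | rfl | rfl <;> revert hs <;> decide
lemma nk0B1 : (1 : Fin 3) ∉ knows S 0 wB := fun h => by
  have := h wC ⟨hB, hC, by decide⟩; revert this; decide
lemma nk0A0 : (0 : Fin 3) ∉ knows S 0 wA := fun h => by
  have := h wB ⟨hA, hB, by decide⟩; revert this; decide
lemma nk0B0 : (0 : Fin 3) ∉ knows S 0 wB := fun h => by
  have := h wA ⟨hB, hA, by decide⟩; revert this; decide

lemma knows_set_eq (δ : Fin 3 → Fin 2) :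
    {x | ∀ ε, bellSim S 0 x δ ε → ε x = δ x} = knows S 0 δ := rfl

lemma nkA' (n : ℕ) : (0 : Fin 3) ∉ knowsC S n wA := by rw [knowsC_eq]; exact nkA
lemma nkB0' (n : ℕ) : (0 : Fin 3) ∉ knowsC S n wB := by rw [knowsC_eq]; exact nkB0
lemma nkB1' (n : ℕ) : (1 : Fin 3) ∉ knowsC S n wB := by rw [knowsC_eq]; exact nkB1
lemma nkC1' (n : ℕ) : (1 : Fin 3) ∉ knowsC S n wC := by rw [knowsC_eq]; exact nkC1

lemma sim1_eq {g δ δ'} (h : bellSim S 1 g δ δ') : δ = δ' := by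
  obtain ⟨h0, hK⟩ := h
  rw [knows_set_eq, knows_set_eq] at hK
  obtain ⟨hδ, hδ', -⟩ := sim0 h0
  rcases mem_S hδ with rfl | rfl | rfl <;> rcases mem_S hδ' with rfl | rfl | rfl
  · rfl
  · exact absurd ((Set.ext_iff.mp hK 1).mp k0A1) nk0B1
  · exact absurd ((Set.ext_iff.mp hK 0).mpr k0C0) nk0A0
  · exact absurd ((Set.ext_iff.mp hK 1).mpr k0A1) nk0B1
  · rfl
  · exact absurd ((Set.ext_iff.mp hK 0).mpr k0C0) nk0B0
  · exact absurd ((Set.ext_iff.mp hK 0).mp k0C0) nk0A0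
  · exact absurd ((Set.ext_iff.mp hK 0).mp k0C0) nk0B0
  · rfl

end S12

/-- On `S = {000, 100, 110}` the coarse bell_∅ dynamics never refines the relations:
the coarse knower set is nonempty at every world, the coarse relations equal the stage-0
relations, child `a` never knows at `000` or `100` and child `b` never knows at `100` or
`110`; whereas under the fine dynamics all children eventually know. -/
theorem stmt_12 :
    (∀ δ ∈ ({![0,0,0], ![1,0,0], ![1,1,0]} : Set (Fin 3 → Fin 2)),
      knowsC ({![0,0,0], ![1,0,0], ![1,1,0]} : Set (Fin 3 → Fin 2)) 0 δ ≠ ∅) ∧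
    (∀ (n : ℕ) (g : Fin 3) (δ δ' : Fin 3 → Fin 2),
      bellSimC ({![0,0,0], ![1,0,0], ![1,1,0]} : Set (Fin 3 → Fin 2)) n g δ δ' ↔
        bellSimC ({![0,0,0], ![1,0,0], ![1,1,0]} : Set (Fin 3 → Fin 2)) 0 g δ δ') ∧
    (∀ n : ℕ,
      (0 : Fin 3) ∉ knowsC ({![0,0,0], ![1,0,0], ![1,1,0]} : Set (Fin 3 → Fin 2)) n ![0,0,0] ∧
      (0 : Fin 3) ∉ knowsC ({![0,0,0], ![1,0,0], ![1,1,0]} : Set (Fin 3 → Fin 2)) n ![1,0,0] ∧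
      (1 : Fin 3) ∉ knowsC ({![0,0,0], ![1,0,0], ![1,1,0]} : Set (Fin 3 → Fin 2)) n ![1,0,0] ∧
      (1 : Fin 3) ∉ knowsC ({![0,0,0], ![1,0,0], ![1,1,0]} : Set (Fin 3 → Fin 2)) n ![1,1,0]) ∧
    solvable ({![0,0,0], ![1,0,0], ![1,1,0]} : Set (Fin 3 → Fin 2)) := by
    refine ⟨fun δ hδ => S12.kC0_ne hδ, S12.simC_eq,
    fun n => ⟨S12.nkA' n, S12.nkB0' n, S12.nkB1' n, S12.nkC1' n⟩,
    fun δ hδ g => ⟨1, fun δ' h => by rw [← S12.sim1_eq h]⟩⟩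
end

section
/- Take G = {a, b, c} and C = {0, 1}, and let S = ({0,1}^3) \ {000} (the seven worlds remaining after father's announcement that at least one child is muddy). Then the fine bell dynamics and the coarse bell_∅ dynamics coincide on S: for every n ∈ ℕ and g ∈ G, the relations ~_g^n and ~'^n_g are equal and K_n = K'_n; moreover K_2(δ) = {a, b, c} for every δ ∈ S, so all children know whether they are muddy after at most three rounds. -/
abbrev S7 : Set (Fin 3 → Fin 2) := (Set.univ : Set (Fin 3 → Fin 2)) \ {![0,0,0]}

instance S7.dec : DecidablePred (· ∈ S7) := fun δ =>
  decidable_of_iff (¬ δ = ![0,0,0]) (by simp [S7])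

instance decGSim (g : Fin 3) (δ δ' : Fin 3 → Fin 2) : Decidable (gSim g δ δ') := by
  unfold gSim; infer_instance

instance decBell : ∀ (n : ℕ) (g : Fin 3) (δ δ' : Fin 3 → Fin 2),
    Decidable (bellSim S7 n g δ δ')
  | 0, g, δ, δ' => by rw [bellSim]; infer_instance
  | n+1, g, δ, δ' => by
      have := decBell n
      refine decidable_of_iff (bellSim S7 n g δ δ' ∧
        ∀ x : Fin 3, (∀ ε, bellSim S7 n x δ ε → ε x = δ x) ↔
          (∀ ε, bellSim S7 n x δ' ε → ε x = δ' x)) ?_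
      constructor
      · rintro ⟨h1, h2⟩
        exact ⟨h1, Set.ext fun x => h2 x⟩
      · rintro ⟨h1, h2⟩
        exact ⟨h1, fun x => Set.ext_iff.mp h2 x⟩

instance decBellC : ∀ (n : ℕ) (g : Fin 3) (δ δ' : Fin 3 → Fin 2),
    Decidable (bellSimC S7 n g δ δ')
  | 0, g, δ, δ' => by rw [bellSimC]; infer_instance
  | n+1, g, δ, δ' => by
      have := decBellC n
      refine decidable_of_iff (bellSimC S7 n g δ δ' ∧
        ((∀ x : Fin 3, ¬ ∀ ε, bellSimC S7 n x δ ε → ε x = δ x) ↔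
          (∀ x : Fin 3, ¬ ∀ ε, bellSimC S7 n x δ' ε → ε x = δ' x))) ?_
      constructor
      · rintro ⟨h1, h2⟩
        refine ⟨h1, ?_⟩
        simp only [Set.eq_empty_iff_forall_notMem, Set.mem_setOf_eq]
        exact h2
      · rintro ⟨h1, h2⟩
        refine ⟨h1, ?_⟩
        simpa only [Set.eq_empty_iff_forall_notMem, Set.mem_setOf_eq] using h2

lemma eq_at_one : ∀ (g : Fin 3) (δ δ' : Fin 3 → Fin 2),
    bellSim S7 1 g δ δ' ↔ bellSimC S7 1 g δ δ' := by decide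

lemma diag2 : ∀ (g : Fin 3) (δ δ' : Fin 3 → Fin 2),
    bellSim S7 2 g δ δ' ↔ (δ ∈ S7 ∧ δ = δ') := by decide

lemma diag2C : ∀ (g : Fin 3) (δ δ' : Fin 3 → Fin 2),
    bellSimC S7 2 g δ δ' ↔ (δ ∈ S7 ∧ δ = δ') := by decide

lemma diagN : ∀ (n : ℕ) (g : Fin 3) (δ δ' : Fin 3 → Fin 2),
    bellSim S7 (n + 2) g δ δ' ↔ (δ ∈ S7 ∧ δ = δ') := by
  intro n
  induction n with
  | zero => exact diag2
  | succ n ih =>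
    intro g δ δ'
    show bellSim S7 (n + 2) g δ δ' ∧ _ ↔ _
    constructor
    · rintro ⟨h, -⟩; exact (ih g δ δ').1 h
    · rintro ⟨hS, rfl⟩
      exact ⟨(ih g δ δ).2 ⟨hS, rfl⟩, rfl⟩

lemma diagNC : ∀ (n : ℕ) (g : Fin 3) (δ δ' : Fin 3 → Fin 2),
    bellSimC S7 (n + 2) g δ δ' ↔ (δ ∈ S7 ∧ δ = δ') := by
  intro n
  induction n with
  | zero => exact diag2C
  | succ n ih =>
    intro g δ δ'
    show bellSimC S7 (n + 2) g δ δ' ∧ _ ↔ _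
    constructor
    · rintro ⟨h, -⟩; exact (ih g δ δ').1 h
    · rintro ⟨hS, rfl⟩
      exact ⟨(ih g δ δ).2 ⟨hS, rfl⟩, Iff.rfl⟩

lemma rel_eq : ∀ (n : ℕ) (g : Fin 3) (δ δ' : Fin 3 → Fin 2),
    bellSim S7 n g δ δ' ↔ bellSimC S7 n g δ δ'
  | 0 => fun _ _ _ => Iff.rfl
  | 1 => eq_at_one
  | (n+2) => fun g δ δ' => (diagN n g δ δ').trans (diagNC n g δ δ').symm

/-- On the seven worlds remaining after father's announcement, the fine and the coarse
bell_∅ dynamics coincide, and all children know whether they are muddy after at most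
three rounds: `K_2(δ) = {a,b,c}` for every world `δ`. -/
theorem stmt_14 :
    (∀ (n : ℕ) (g : Fin 3) (δ δ' : Fin 3 → Fin 2),
      bellSim ((Set.univ : Set (Fin 3 → Fin 2)) \ {![0,0,0]}) n g δ δ' ↔
        bellSimC ((Set.univ : Set (Fin 3 → Fin 2)) \ {![0,0,0]}) n g δ δ') ∧
    (∀ (n : ℕ) (δ : Fin 3 → Fin 2),
      knows ((Set.univ : Set (Fin 3 → Fin 2)) \ {![0,0,0]}) n δ =
        knowsC ((Set.univ : Set (Fin 3 → Fin 2)) \ {![0,0,0]}) n δ) ∧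
    (∀ δ ∈ (Set.univ : Set (Fin 3 → Fin 2)) \ {![0,0,0]},
      knows ((Set.univ : Set (Fin 3 → Fin 2)) \ {![0,0,0]}) 2 δ = Set.univ) := by
  refine ⟨rel_eq, ?_, ?_⟩
  · intro n δ
    ext g
    simp only [knows, knowsC, Set.mem_setOf_eq]
    exact forall_congr' fun δ' => imp_congr_left (rel_eq n g δ δ')
  · intro δ hδ
    ext g
    simp only [Set.mem_univ, iff_true, knows, Set.mem_setOf_eq]
    intro δ' h
    obtain ⟨-, rfl⟩ := (diag2 g δ δ').1 h
    rfl
end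

section
/- Take G = {a, b, c} and C = {0, 1, 2, 3} (three children, four colours). The set D of constant worlds {000, 111, 222, 333} is the greatest colour-permutation-invariant solvable set: D is colour-permutation-invariant, every child knows its colour at stage 0 at every world of D, and every colour-permutation-invariant solvable S ⊆ (G → C) satisfies S ⊆ D. Moreover the complement (G → C) \ D is also colour-permutation-invariant, but no child ever knows its colour at any of its worlds at any stage. -/
-- the (n+1) case unfolding: sets are literally `knows`
lemma bellSim_succ {G C : Type*} (S : Set (G → C)) (n : ℕ) (g : G) (δ δ' : G → C) :
    bellSim S (n+1) g δ δ' ↔ bellSim S n g δ δ' ∧ knows S n δ = knows S n δ' :=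
  Iff.rfl

lemma bellSim_perm {G C : Type*} {S : Set (G → C)} (hS : permInv S) :
    ∀ n (ι : C ≃ C) (g : G) (δ ε : G → C),
      bellSim S n g δ ε ↔ bellSim S n g (⇑ι ∘ δ) (⇑ι ∘ ε) := by
  intro n
  induction n with
  | zero =>
    intro ι g δ ε
    constructor
    · rintro ⟨h1, h2, h3⟩
      exact ⟨hS ι δ h1, hS ι ε h2, fun h hh => congrArg ι (h3 h hh)⟩
    · rintro ⟨h1, h2, h3⟩
      refine ⟨?_, ?_, fun h hh => ι.injective (h3 h hh)⟩
      · have h := hS ι.symm _ h1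
        have e : ⇑ι.symm ∘ (⇑ι ∘ δ) = δ := by funext i; simp
        rwa [e] at h
      · have h := hS ι.symm _ h2
        have e : ⇑ι.symm ∘ (⇑ι ∘ ε) = ε := by funext i; simp
        rwa [e] at h
  | succ n IH =>
    have KP : ∀ (ι : C ≃ C) (δ : G → C), knows S n (⇑ι ∘ δ) = knows S n δ := by
      intro ι δ
      ext x
      simp only [knows, Set.mem_setOf_eq]
      constructor
      · intro hx ε' hb
        have := hx (⇑ι ∘ ε') ((IH ι x δ ε').1 hb)
        exact ι.injective this
      · intro hx ε' hb
        have hcomp : ⇑ι ∘ (⇑ι.symm ∘ ε') = ε' := by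
          funext i; simp
        have hb' : bellSim S n x δ (⇑ι.symm ∘ ε') := by
          apply (IH ι x δ (⇑ι.symm ∘ ε')).2
          rw [hcomp]; exact hb
        have h2 := hx _ hb'
        have := congrArg ι h2
        simpa using this
    intro ι g δ ε
    rw [bellSim_succ, bellSim_succ, KP ι δ, KP ι ε]
    exact and_congr_left' (IH ι g δ ε)

lemma knows_perm {G C : Type*} {S : Set (G → C)} (hS : permInv S) (n : ℕ) (ι : C ≃ C)
    (δ : G → C) : knows S n (⇑ι ∘ δ) = knows S n δ := by
  ext x
  simp only [knows, Set.mem_setOf_eq]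
  constructor
  · intro hx ε' hb
    exact ι.injective (hx (⇑ι ∘ ε') ((bellSim_perm hS n ι x δ ε').1 hb))
  · intro hx ε' hb
    have hcomp : ⇑ι ∘ (⇑ι.symm ∘ ε') = ε' := by funext i; simp
    have hb' : bellSim S n x δ (⇑ι.symm ∘ ε') := by
      apply (bellSim_perm hS n ι x δ _).2
      rw [hcomp]; exact hb
    have := congrArg ι (hx _ hb')
    simpa using this

lemma memD_iff (δ : Fin 3 → Fin 4) :
    δ ∈ ({![0,0,0], ![1,1,1], ![2,2,2], ![3,3,3]} : Set (Fin 3 → Fin 4)) ↔ ∀ i, δ i = δ 0 := by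
  constructor
  · rintro (rfl | rfl | rfl | rfl) i <;> fin_cases i <;> rfl
  · intro h
    have hd : δ = ![δ 0, δ 0, δ 0] := by
      funext i; fin_cases i <;> simp [h]
    rw [hd]
    obtain ⟨k, hk⟩ : ∃ k, δ 0 = k := ⟨_, rfl⟩
    rw [hk]
    fin_cases k
    · exact Or.inl rfl
    · exact Or.inr (Or.inl rfl)
    · exact Or.inr (Or.inr (Or.inl rfl))
    · exact Or.inr (Or.inr (Or.inr rfl))

lemma exists_ne3 : ∀ g : Fin 3, ∃ h : Fin 3, h ≠ g := by decide
lemma exists_fresh2 : ∀ a b : Fin 4, ∃ z : Fin 4, z ≠ a ∧ z ≠ b := by decide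
lemma exists_fresh : ∀ δ : Fin 3 → Fin 4, ∃ c : Fin 4, ∀ i, δ i ≠ c := by decide
lemma exists_unique_agent : ∀ δ : Fin 3 → Fin 4, (¬ ∀ i, δ i = δ 0) →
    ∃ g, ∀ h, h ≠ g → δ h ≠ δ g := by decide

/-- Three children, four colours: the set `D = {000, 111, 222, 333}` of constant worlds is
the greatest colour-permutation-invariant solvable set; its complement is also
colour-permutation-invariant, but there no child ever knows its colour. -/
theorem stmt_15 :
    permInv ({![0,0,0], ![1,1,1], ![2,2,2], ![3,3,3]} : Set (Fin 3 → Fin 4)) ∧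
    (∀ δ ∈ ({![0,0,0], ![1,1,1], ![2,2,2], ![3,3,3]} : Set (Fin 3 → Fin 4)), ∀ g : Fin 3,
      g ∈ knows ({![0,0,0], ![1,1,1], ![2,2,2], ![3,3,3]} : Set (Fin 3 → Fin 4)) 0 δ) ∧
    (∀ S : Set (Fin 3 → Fin 4), permInv S → solvable S →
      S ⊆ ({![0,0,0], ![1,1,1], ![2,2,2], ![3,3,3]} : Set (Fin 3 → Fin 4))) ∧
    permInv (({![0,0,0], ![1,1,1], ![2,2,2], ![3,3,3]} : Set (Fin 3 → Fin 4))ᶜ) ∧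
    (∀ δ ∈ (({![0,0,0], ![1,1,1], ![2,2,2], ![3,3,3]} : Set (Fin 3 → Fin 4))ᶜ),
      ∀ (g : Fin 3) (n : ℕ),
        g ∉ knows (({![0,0,0], ![1,1,1], ![2,2,2], ![3,3,3]} : Set (Fin 3 → Fin 4))ᶜ) n δ) := by
  refine ⟨?_, ?_, ?_, ?_, ?_⟩
  · -- permInv D
    intro ι δ hδ
    rw [memD_iff] at hδ ⊢
    intro i
    exact congrArg ι (hδ i)
  · -- knows at stage 0
    rintro δ hδ g δ' ⟨_, hδ', hsim⟩
    obtain ⟨h, hh⟩ := exists_ne3 g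
    rw [memD_iff] at hδ hδ'
    calc δ' g = δ' 0 := hδ' g
      _ = δ' h := (hδ' h).symm
      _ = δ h := (hsim h hh).symm
      _ = δ 0 := hδ h
      _ = δ g := (hδ g).symm
  · -- maximality
    intro S hperm hsol δ hδ
    by_contra hδD
    rw [memD_iff] at hδD
    obtain ⟨g, hg⟩ := exists_unique_agent δ hδD
    obtain ⟨c, hc⟩ := exists_fresh δ
    set ι := Equiv.swap (δ g) c with hι
    have hfix : ∀ h, h ≠ g → ι (δ h) = δ h :=
      fun h hh => Equiv.swap_apply_of_ne_of_ne (hg h hh) (hc h)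
    have hmove : ι (δ g) = c := Equiv.swap_apply_left _ _
    have hball : ∀ n, bellSim S n g δ (⇑ι ∘ δ) := by
      intro n
      induction n with
      | zero => exact ⟨hδ, hperm ι δ hδ, fun h hh => (hfix h hh).symm⟩
      | succ n IH =>
        exact (bellSim_succ S n g δ _).2 ⟨IH, (knows_perm hperm n ι δ).symm⟩
    obtain ⟨n, hn⟩ := hsol δ hδ g
    have h1 : (⇑ι ∘ δ) g = δ g := hn _ (hball n)
    have h2 : c = δ g := by rw [← hmove]; exact h1
    exact hc g h2.symm
  · -- permInv of complement
    intro ι δ hδ hmem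
    apply hδ
    rw [memD_iff] at hmem ⊢
    intro i
    exact ι.injective (hmem i)
  · -- nobody ever knows on the complement
    have NC : ∀ δ ∈ (({![0,0,0], ![1,1,1], ![2,2,2], ![3,3,3]} : Set (Fin 3 → Fin 4))ᶜ),
        ∀ g : Fin 3, ∃ ε, ε ∈ (({![0,0,0], ![1,1,1], ![2,2,2], ![3,3,3]} :
          Set (Fin 3 → Fin 4))ᶜ) ∧ gSim g δ ε ∧ ε g ≠ δ g := by
      intro δ hδ g
      obtain ⟨h, hh⟩ := exists_ne3 g
      obtain ⟨z, hz1, hz2⟩ := exists_fresh2 (δ g) (δ h)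
      refine ⟨Function.update δ g z, ?_, ?_, ?_⟩
      · intro hmem
        rw [memD_iff] at hmem
        have e1 : Function.update δ g z h = Function.update δ g z g :=
          (hmem h).trans (hmem g).symm
        rw [Function.update_of_ne hh, Function.update_self] at e1
        exact hz2 e1.symm
      · intro h' hh'
        rw [Function.update_of_ne hh']
      · rw [Function.update_self]; exact hz1
    set T := (({![0,0,0], ![1,1,1], ![2,2,2], ![3,3,3]} : Set (Fin 3 → Fin 4))ᶜ) with hT
    have MAIN : ∀ n : ℕ, (∀ (g : Fin 3) (δ ε : Fin 3 → Fin 4),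
        bellSim T n g δ ε ↔ (δ ∈ T ∧ ε ∈ T ∧ gSim g δ ε)) ∧
        (∀ δ ∈ T, knows T n δ = ∅) := by
      intro n
      induction n with
      | zero =>
        refine ⟨fun g δ ε => Iff.rfl, ?_⟩
        intro δ hδ
        ext g
        simp only [knows, Set.mem_setOf_eq, Set.mem_empty_iff_false, iff_false, not_forall]
        obtain ⟨ε, hε, hsim, hne⟩ := NC δ hδ g
        exact ⟨ε, ⟨hδ, hε, hsim⟩, hne⟩
      | succ n IH =>
        have hiff : ∀ (g : Fin 3) (δ ε : Fin 3 → Fin 4),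
            bellSim T (n+1) g δ ε ↔ (δ ∈ T ∧ ε ∈ T ∧ gSim g δ ε) := by
          intro g δ ε
          rw [bellSim_succ, IH.1]
          constructor
          · rintro ⟨h1, _⟩; exact h1
          · intro h1; exact ⟨h1, by rw [IH.2 δ h1.1, IH.2 ε h1.2.1]⟩
        refine ⟨hiff, ?_⟩
        intro δ hδ
        ext g
        simp only [knows, Set.mem_setOf_eq, Set.mem_empty_iff_false, iff_false, not_forall]
        obtain ⟨ε, hε, hsim, hne⟩ := NC δ hδ g
        exact ⟨ε, (hiff g δ ε).2 ⟨hδ, hε, hsim⟩, hne⟩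
    intro δ hδ g n hk
    rw [(MAIN n).2 δ hδ] at hk
    exact hk
end
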